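/- arXiv:1001.2027 — 6 statements merged into one kernel-verified Lean document; each statement's English description precedes it below -/
import Mathlib

section
/- Let λ be an algebraic integer of degree d with minimal polynomial x^d + a_{d-1}x^{d-1} + ⋯ + a_0, a_0 ≠ 0. Then for all integers k ≥ i ≥ 0, the number a_0^{k-i} λ^i is an integer linear combination of λ^k, λ^{k+1}, …, λ^{k+d-1}. -/
/-!
Write the minimal polynomial as `p = X * q + C a₀`. Evaluating at `λ` gives `a₀ = λ * (-q)(λ)`,
hence `a₀ ^ (k - i) * λ ^ i = λ ^ k * g(λ)` with `g = (-q) ^ (k - i)`. Since `p` is monic,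
`g(λ) = (g %ₘ p)(λ)` and `g %ₘ p` has degree `< d`, so multiplying out by `λ ^ k` gives the
combination of `λ ^ k, …, λ ^ (k + d - 1)`.
-/

open Polynomial

namespace Polynomial

variable {R A : Type*} [CommRing R] [CommRing A] [Algebra R A]

theorem algebraMap_coeff_zero_eq_mul_aeval_neg_divX {p : R[X]} {x : A} (hx : aeval x p = 0) :
    algebraMap R A (p.coeff 0) = x * aeval x (-p.divX) := by
  have h := congrArg (aeval x) (X_mul_divX_add p)
  rw [map_add, map_mul, aeval_X, aeval_C, hx] at h
  rw [map_neg, mul_neg]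
  exact eq_neg_of_add_eq_zero_right h

theorem algebraMap_coeff_zero_pow_mul_pow {p : R[X]} {x : A} (hx : aeval x p = 0)
    {i k : ℕ} (hik : i ≤ k) :
    algebraMap R A (p.coeff 0) ^ (k - i) * x ^ i = x ^ k * aeval x ((-p.divX) ^ (k - i)) := by
  rw [algebraMap_coeff_zero_eq_mul_aeval_neg_divX hx, map_pow, mul_pow,
    ← Nat.sub_add_cancel hik, Nat.add_sub_cancel, pow_add]
  ring

theorem pow_mul_aeval_eq_sum_modByMonic {p : R[X]} (hp : p.Monic) (hp1 : p ≠ 1) {x : A}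
    (hx : aeval x p = 0) (k : ℕ) (f : R[X]) :
    x ^ k * aeval x f = ∑ j : Fin p.natDegree, (f %ₘ p).coeff j • x ^ (k + (j : ℕ)) := by
  rw [← aeval_modByMonic_eq_self_of_root hx, aeval_eq_sum_range' (natDegree_modByMonic_lt f hp hp1),
    Finset.mul_sum, ← Fin.sum_univ_eq_sum_range]
  simp only [mul_smul_comm, pow_add]

end Polynomial

theorem a0_pow_mul_pow_lincomb_general
    (lam : ℝ) (hint : IsIntegral ℤ lam)
    (d : ℕ) (hd : d = (minpoly ℤ lam).natDegree)
    (a0 : ℤ) (ha0 : a0 = (minpoly ℤ lam).coeff 0) :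
    ∀ k i : ℕ, i ≤ k → ∃ c : Fin d → ℤ,
      (a0 : ℝ) ^ (k - i) * lam ^ i = ∑ j : Fin d, (c j : ℝ) * lam ^ (k + (j : ℕ)) := by
  intro k i hik
  subst hd ha0
  refine ⟨fun j ↦ ((-(minpoly ℤ lam).divX) ^ (k - i) %ₘ minpoly ℤ lam).coeff j, ?_⟩
  rw [← eq_intCast (algebraMap ℤ ℝ), algebraMap_coeff_zero_pow_mul_pow (minpoly.aeval ℤ lam) hik,
    pow_mul_aeval_eq_sum_modByMonic (minpoly.monic hint) (minpoly.ne_one ℤ lam) (minpoly.aeval ℤ lam)]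
  simp only [zsmul_eq_mul]

/-- For a nonzero algebraic integer `λ` of degree `d` with minimal polynomial
`x^d + a_{d-1}x^{d-1} + ⋯ + a_0`, `a_0 ≠ 0`: for all `k ≥ i ≥ 0`, the number
`a_0^{k-i} λ^i` is an integer linear combination of `λ^k, λ^{k+1}, …, λ^{k+d-1}`. -/
theorem a0_pow_mul_pow_lincomb
    (lam : ℝ) (hint : IsIntegral ℤ lam) (hne : lam ≠ 0)
    (d : ℕ) (hd : d = (minpoly ℤ lam).natDegree)
    (a0 : ℤ) (ha0 : a0 = (minpoly ℤ lam).coeff 0) (h0 : a0 ≠ 0) :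
    ∀ k i : ℕ, i ≤ k → ∃ c : Fin d → ℤ,
      (a0 : ℝ) ^ (k - i) * lam ^ i = ∑ j : Fin d, (c j : ℝ) * lam ^ (k + (j : ℕ)) :=
  a0_pow_mul_pow_lincomb_general lam hint d hd a0 ha0
end

section
/- Let p(x) be the minimal polynomial over ℚ of a Pisot number λ of degree d, with constant coefficient a_0 and derivative p'. Let q(x) be a polynomial with integer coefficients, k ≥ 0 an integer, and suppose q(λ)/(a_0^k p'(λ)) = n/m for coprime integers n, m with m > 0. Then m divides a_0^k · g, where g is the greatest common divisor of the coefficients of p'. -/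
/-- A Pisot number: a real algebraic integer `> 1` all of whose algebraic conjugates
other than itself have absolute value strictly less than `1`. -/
def IsPisot (x : ℝ) : Prop :=
  IsIntegral ℤ x ∧ 1 < x ∧
    ∀ z : ℂ, Polynomial.aeval z (minpoly ℤ x) = 0 → z ≠ (x : ℂ) → ‖z‖ < 1

/-!
Since `m q(λ) = n a₀ᵏ p'(λ)`, the minimal polynomial `p` divides `m q - n a₀ᵏ p'` in `ℤ[x]`.
As `deg p' < deg p`, reducing modulo the monic `p` gives `n a₀ᵏ p' = m (q mod p)`, so `m`
divides the content `n a₀ᵏ g` of the left side; coprimality of `m` and `n` removes `n`.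
-/

open Polynomial

namespace Polynomial

variable {R : Type*} [CommRing R] [Nontrivial R]

theorem eq_C_mul_modByMonic_of_dvd_C_mul_sub {p q f : R[X]} {m : R}
    (hp : p.Monic) (hf : f.degree < p.degree) (hdvd : p ∣ C m * q - f) :
    f = C m * (q %ₘ p) := by
  have hmod : (C m * q - f) %ₘ p = 0 := (modByMonic_eq_zero_iff_dvd hp).mpr hdvd
  rwa [sub_modByMonic, (modByMonic_eq_self_iff hp).mpr hf, ← smul_eq_C_mul, smul_modByMonic,
    smul_eq_C_mul, sub_eq_zero, eq_comm] at hmod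

theorem dvd_content_of_monic_dvd_C_mul_sub [NormalizedGCDMonoid R] {p q f : R[X]} {m : R}
    (hp : p.Monic) (hf : f.degree < p.degree) (hdvd : p ∣ C m * q - f) :
    m ∣ f.content := by
  rw [eq_C_mul_modByMonic_of_dvd_C_mul_sub hp hf hdvd]
  exact (associated_content_C_mul m _).symm.dvd_iff_dvd_right.mp (dvd_mul_right _ _)

end Polynomial

theorem dvd_mul_content_derivative_minpoly {R S : Type*} [CommRing R] [IsDomain R]
    [IsIntegrallyClosed R] [NormalizedGCDMonoid R] [CommRing S] [IsDomain S] [Algebra R S]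
    [Module.IsTorsionFree R S] {x : S} (hx : IsIntegral R x) {q : R[X]} {m c : R}
    (h : algebraMap R S m * aeval x q = algebraMap R S c * aeval x (derivative (minpoly R x))) :
    m ∣ c * (derivative (minpoly R x)).content := by
  have hdvd : minpoly R x ∣ C m * q - C c * derivative (minpoly R x) :=
    minpoly.isIntegrallyClosed_dvd hx <| by
      rw [map_sub, map_mul, map_mul, aeval_C, aeval_C, h, sub_self]
  have hdeg : (C c * derivative (minpoly R x)).degree < (minpoly R x).degree :=
    ((degree_mul_le _ _).trans (add_le_of_nonpos_left degree_C_le)).trans_lt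
      (degree_derivative_lt (minpoly.ne_zero hx))
  exact (associated_content_C_mul c _).dvd_iff_dvd_right.mp
    (dvd_content_of_monic_dvd_C_mul_sub (minpoly.monic hx) hdeg hdvd)

theorem denominator_dvd_a0_pow_mul_content_general
    (lam : ℝ) (hp : IsPisot lam)
    (a0 : ℤ)
    (q : Polynomial ℤ) (k : ℕ) (n m : ℤ) (hm : 0 < m) (hcop : Int.gcd n m = 1)
    (h : (Polynomial.aeval lam q) /
        ((a0 : ℝ) ^ k * Polynomial.aeval lam (Polynomial.derivative (minpoly ℤ lam)))
        = (n : ℝ) / (m : ℝ)) :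
    m ∣ a0 ^ k * (Polynomial.derivative (minpoly ℤ lam)).content := by
  have hm0 : (m : ℝ) ≠ 0 := by positivity
  have hmn : m ∣ n * (a0 ^ k * (derivative (minpoly ℤ lam)).content) := by
    by_cases hD : (a0 : ℝ) ^ k * aeval lam (derivative (minpoly ℤ lam)) = 0
    · rw [hD, div_zero, eq_comm, div_eq_zero_iff, or_iff_left hm0, Int.cast_eq_zero] at h
      simp [h]
    · rw [div_eq_div_iff hD hm0] at h
      rw [← mul_assoc]
      refine dvd_mul_content_derivative_minpoly (q := q) hp.1 ?_
      push_cast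
      linear_combination h
  exact (Int.isCoprime_iff_gcd_eq_one.mpr hcop).symm.dvd_of_dvd_mul_left hmn

/-- Let `λ` be a Pisot number of degree `d`, with minimal polynomial `p` having
constant coefficient `a_0` and derivative `p'`. If `q ∈ ℤ[x]`, `k ≥ 0`, and
`q(λ)/(a_0^k p'(λ)) = n/m` for coprime integers `n, m` with `m > 0`, then `m`
divides `a_0^k · g`, where `g` is the gcd of the coefficients of `p'`. -/
theorem denominator_dvd_a0_pow_mul_content
    (lam : ℝ) (hp : IsPisot lam) (d : ℕ) (hd : d = (minpoly ℤ lam).natDegree)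
    (a0 : ℤ) (ha0 : a0 = (minpoly ℤ lam).coeff 0)
    (q : Polynomial ℤ) (k : ℕ) (n m : ℤ) (hm : 0 < m) (hcop : Int.gcd n m = 1)
    (h : (Polynomial.aeval lam q) /
        ((a0 : ℝ) ^ k * Polynomial.aeval lam (Polynomial.derivative (minpoly ℤ lam)))
        = (n : ℝ) / (m : ℝ)) :
    m ∣ a0 ^ k * (Polynomial.derivative (minpoly ℤ lam)).content :=
  denominator_dvd_a0_pow_mul_content_general lam hp a0 q k n m hm hcop h
end

section
/- Let M be a 2m×2m integer matrix of block form [[A, B], [B, A]] whose characteristic polynomial (over ℚ) equals x^r (x - N)(x - 1)^s for some integers r, s ≥ 0 with r + s + 1 = 2m, where N is an even integer. Then s is even. (Equivalently: such a matrix cannot have N with multiplicity one and 1 with odd multiplicity as its only nonzero eigenvalues when N is even.) -/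
/-! Comparing the two expressions for the trace of `M`: it is `2 · tr A` from the block form and
`N + s` from the characteristic polynomial (minus its subleading coefficient), so `s ≡ N` mod 2. -/

open Polynomial

theorem Polynomial.nextCoeff_X_pow_mul_X_sub_C_mul_X_sub_C_pow {R : Type*} [CommRing R]
    (r s : ℕ) (a b : R) :
    (X ^ r * (X - C a) * (X - C b) ^ s).nextCoeff = -(a + s * b) := by
  have hX : (X : R[X]).nextCoeff = 0 := by simpa using nextCoeff_X_add_C (0 : R)
  rw [((monic_X_pow r).mul (monic_X_sub_C a)).nextCoeff_mul ((monic_X_sub_C b).pow s),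
    (monic_X_pow r).nextCoeff_mul (monic_X_sub_C a), monic_X.nextCoeff_pow,
    (monic_X_sub_C b).nextCoeff_pow, nextCoeff_X_sub_C, nextCoeff_X_sub_C, hX]
  simp only [smul_zero, nsmul_eq_mul, zero_add]
  ring

theorem Matrix.trace_fromBlocks {l m R : Type*} [Fintype l] [Fintype m] [AddCommMonoid R]
    (A : Matrix l l R) (B : Matrix l m R) (C : Matrix m l R) (D : Matrix m m R) :
    (Matrix.fromBlocks A B C D).trace = A.trace + D.trace := by
  simp [Matrix.trace, Fintype.sum_sum_type]

theorem even_multiplicity_of_one_general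
    (m : ℕ) (A B : Matrix (Fin m) (Fin m) ℤ) (N : ℤ) (hN : Even N)
    (r s : ℕ)
    (hchar : ((Matrix.fromBlocks A B B A).map (Int.cast : ℤ → ℚ)).charpoly =
      Polynomial.X ^ r * (Polynomial.X - Polynomial.C (N : ℚ)) *
        (Polynomial.X - 1) ^ s) :
    Even s := by
  have htrace_blocks : ((Matrix.fromBlocks A B B A).map (Int.cast : ℤ → ℚ)).trace =
      ((2 * A.trace : ℤ) : ℚ) :=
    calc _ = Int.castAddHom ℚ (Matrix.fromBlocks A B B A).trace :=
          (AddMonoidHom.map_trace _ _).symm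
      _ = _ := by rw [Matrix.trace_fromBlocks, two_mul, Int.coe_castAddHom]
  have htrace_charpoly : ((Matrix.fromBlocks A B B A).map (Int.cast : ℤ → ℚ)).trace = N + s := by
    rw [Matrix.trace_eq_neg_charpoly_nextCoeff, hchar, ← C_1,
      nextCoeff_X_pow_mul_X_sub_C_mul_X_sub_C_pow, neg_neg, mul_one]
  have hs : (s : ℤ) = 2 * A.trace - N := by
    have : 2 * A.trace = N + s := by
      exact_mod_cast htrace_blocks.symm.trans htrace_charpoly
    omega
  exact_mod_cast hs ▸ (even_two_mul A.trace).sub hN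

/-- Let `M = [[A,B],[B,A]]` be a `2m × 2m` integer block matrix whose characteristic
polynomial over `ℚ` is `x^r (x - N)(x - 1)^s` with `r + s + 1 = 2m` and `N` an even
integer. Then `s` is even. -/
theorem even_multiplicity_of_one
    (m : ℕ) (A B : Matrix (Fin m) (Fin m) ℤ) (N : ℤ) (hN : Even N)
    (r s : ℕ) (hrs : r + s + 1 = 2 * m)
    (hchar : ((Matrix.fromBlocks A B B A).map (Int.cast : ℤ → ℚ)).charpoly =
      Polynomial.X ^ r * (Polynomial.X - Polynomial.C (N : ℚ)) *
        (Polynomial.X - 1) ^ s) :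
    Even s :=
  even_multiplicity_of_one_general m A B N hN r s hchar
end

section
/- Let θ be the tribonacci number (the real root > 1 of x³ - x² - x - 1) and let λ = 3θ⁴. Then λ is a Pisot number of algebraic degree 3, and the product of λ with its algebraic conjugates (the norm of λ) equals 27. -/
open Polynomial

noncomputable def pisotCubic : ℤ[X] := X ^ 3 - 33 * X ^ 2 - 45 * X - 27

theorem aeval_pisotCubic {A : Type*} [CommRing A] (x : A) :
    aeval x pisotCubic = x ^ 3 - 33 * x ^ 2 - 45 * x - 27 := by
  simp only [pisotCubic, map_sub, map_mul, map_pow, aeval_X, map_ofNat]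

theorem pisotCubic_monic : pisotCubic.Monic := by
  unfold pisotCubic; monicity!

theorem natDegree_pisotCubic : pisotCubic.natDegree = 3 := by
  unfold pisotCubic; compute_degree!

theorem coeff_pisotCubic_zero : pisotCubic.coeff 0 = -27 := by
  simp [pisotCubic, coeff_X_pow]

theorem aeval_pisotCubic_zmod_five_ne_zero (x : ZMod 5) : aeval x pisotCubic ≠ 0 := by
  rw [aeval_pisotCubic]; revert x; decide

theorem aeval_pisotCubic_int_ne_zero (n : ℤ) : aeval n pisotCubic ≠ 0 := fun h =>
  aeval_pisotCubic_zmod_five_ne_zero n <| by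
    rw [← eq_intCast (algebraMap ℤ (ZMod 5)), aeval_algebraMap_apply, h, map_zero]

theorem irreducible_map_pisotCubic : Irreducible (pisotCubic.map (algebraMap ℤ ℚ)) := by
  refine irreducible_of_degree_le_three_of_not_isRoot ?_ fun r hr => ?_
  · rw [pisotCubic_monic.natDegree_map, natDegree_pisotCubic]; decide
  rw [IsRoot.def, eval_map, ← aeval_def] at hr
  obtain ⟨n, rfl, -⟩ := exists_integer_of_is_root_of_monic pisotCubic_monic hr
  exact aeval_pisotCubic_int_ne_zero n ((aeval_algebraMap_eq_zero_iff ℚ n _).mp hr)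

section CharZero

variable {K : Type*} [Field K] [CharZero K] {x : K}

theorem minpoly_rat_eq_map_pisotCubic (hx : aeval x pisotCubic = 0) :
    minpoly ℚ x = pisotCubic.map (algebraMap ℤ ℚ) :=
  (minpoly.eq_of_irreducible_of_monic irreducible_map_pisotCubic
    (by rwa [aeval_map_algebraMap]) (pisotCubic_monic.map _)).symm

theorem minpoly_int_eq_pisotCubic (hx : aeval x pisotCubic = 0) :
    minpoly ℤ x = pisotCubic := by
  apply map_injective (algebraMap ℤ ℚ) (RingHom.injective_int _)
  rw [← minpoly.isIntegrallyClosed_eq_field_fractions' ℚ ⟨_, pisotCubic_monic, hx⟩,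
    minpoly_rat_eq_map_pisotCubic hx]

end CharZero

theorem Complex.normSq_eq_of_sq_add_mul_add_eq_zero {b c : ℝ} (hbc : b ^ 2 < 4 * c) {z : ℂ}
    (hz : z ^ 2 + b * z + c = 0) : Complex.normSq z = c := by
  have hre := congrArg Complex.re hz
  have him := congrArg Complex.im hz
  simp only [pow_two, Complex.add_re, Complex.add_im, Complex.mul_re, Complex.mul_im,
    Complex.ofReal_re, Complex.ofReal_im, Complex.zero_re, Complex.zero_im] at hre him
  have him_ne : z.im ≠ 0 := by
    intro him_zero
    rw [him_zero] at hre
    nlinarith [sq_nonneg (2 * z.re + b)]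
  have hre_eq : 2 * z.re + b = 0 :=
    (mul_eq_zero.mp (by linear_combination him : z.im * (2 * z.re + b) = 0)).resolve_left him_ne
  rw [Complex.normSq_apply]
  linear_combination -hre + z.re * hre_eq

theorem pisotCubic_root_bounds {x : ℝ} (hx : aeval x pisotCubic = 0) (h0 : 0 ≤ x) :
    33 < x ∧ x < 34.5 := by
  rw [aeval_pisotCubic] at hx
  have h33 : 33 < x := by nlinarith
  exact ⟨h33, by nlinarith⟩

theorem aeval_pisotCubic_eq_mul {L : ℝ} (hL : aeval L pisotCubic = 0) (h0 : L ≠ 0) (z : ℂ) :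
    aeval z pisotCubic = (z - L) * (z ^ 2 + (L - 33 : ℝ) * z + (27 / L : ℝ)) := by
  rw [aeval_pisotCubic] at hL ⊢
  have hL' : (L : ℂ) ^ 3 - 33 * L ^ 2 - 45 * L - 27 = 0 := by exact_mod_cast hL
  have : (L : ℂ) ≠ 0 := by exact_mod_cast h0
  push_cast
  field_simp
  linear_combination z * hL'

theorem norm_lt_one_of_aeval_pisotCubic {L : ℝ} (hL : aeval L pisotCubic = 0) (h0 : 0 ≤ L)
    {z : ℂ} (hz : aeval z pisotCubic = 0) (hne : z ≠ L) : ‖z‖ < 1 := by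
  obtain ⟨hlo, hhi⟩ := pisotCubic_root_bounds hL h0
  rw [aeval_pisotCubic_eq_mul hL (by positivity) z, mul_eq_zero, sub_eq_zero] at hz
  have hdisc : (L - 33) ^ 2 < 4 * (27 / L) := by
    rw [mul_div_assoc', lt_div_iff₀ (by linarith)]
    nlinarith
  have hsq := Complex.normSq_eq_of_sq_add_mul_add_eq_zero hdisc (hz.resolve_left hne)
  rw [← sq_lt_one_iff₀ (norm_nonneg z), ← Complex.normSq_eq_norm_sq, hsq, div_lt_one] <;> linarith

theorem aeval_pisotCubic_three_mul_pow_four {θ : ℝ} (hθ : θ ^ 3 = θ ^ 2 + θ + 1) :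
    aeval (3 * θ ^ 4) pisotCubic = 0 := by
  rw [aeval_pisotCubic]
  -- the cofactor is the quotient of `pisotCubic (3X⁴)` by `X³ - X² - X - 1`
  linear_combination (27 - 27 * θ + 54 * θ ^ 3 + 54 * θ ^ 4 - 108 * θ ^ 5 + 108 * θ ^ 6
    + 54 * θ ^ 7 + 27 * θ ^ 8 + 27 * θ ^ 9) * hθ

theorem three_theta_fourth_pisot_general
    (θ : ℝ) (hroot : θ ^ 3 = θ ^ 2 + θ + 1) :
    IsPisot (3 * θ ^ 4) ∧
    (minpoly ℚ (3 * θ ^ 4)).natDegree = 3 ∧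
    (-1 : ℚ) ^ (minpoly ℚ (3 * θ ^ 4)).natDegree * (minpoly ℚ (3 * θ ^ 4)).coeff 0 = 27 := by
  have hL := aeval_pisotCubic_three_mul_pow_four hroot
  have hL0 : 0 ≤ 3 * θ ^ 4 := by positivity
  have hmin := minpoly_rat_eq_map_pisotCubic hL
  have hdeg : (minpoly ℚ (3 * θ ^ 4)).natDegree = 3 := by
    rw [hmin, pisotCubic_monic.natDegree_map, natDegree_pisotCubic]
  refine ⟨⟨⟨_, pisotCubic_monic, hL⟩, by linarith [(pisotCubic_root_bounds hL hL0).1], ?_⟩,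
    hdeg, ?_⟩
  · intro z hz hne
    rw [minpoly_int_eq_pisotCubic hL] at hz
    exact norm_lt_one_of_aeval_pisotCubic hL hL0 hz hne
  · rw [hdeg, hmin, coeff_map, coeff_pisotCubic_zero]
    norm_num

/-- If `θ` is the tribonacci number and `λ = 3θ⁴`, then `λ` is a Pisot number of
algebraic degree 3, and the norm of `λ` (the product of `λ` with its conjugates,
which equals `(-1)^d` times the constant coefficient of its minimal polynomial)
is `27`. -/
theorem three_theta_fourth_pisot
    (θ : ℝ) (hroot : θ ^ 3 = θ ^ 2 + θ + 1) (hθ : 1 < θ) :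
    IsPisot (3 * θ ^ 4) ∧
    (minpoly ℚ (3 * θ ^ 4)).natDegree = 3 ∧
    (-1 : ℚ) ^ (minpoly ℚ (3 * θ ^ 4)).natDegree * (minpoly ℚ (3 * θ ^ 4)).coeff 0 = 27 :=
  three_theta_fourth_pisot_general θ hroot
end

section
/- Let λ > 1 be a real algebraic number of degree d with minimal polynomial x^d + a_{d-1}x^{d-1} + ⋯ + a_0, all of whose conjugates other than λ have absolute value < 1 (λ Pisot). Write λ^k = ∑_{i=0}^{d-1} c_{k,i} λ^i with c_{k,i} ∈ ℚ. Then the vectors (c_{k,0}, …, c_{k,d-1})^T / λ^k converge as k → ∞ to the vector r with r_j = (λ^{d-1-j} + a_{d-1}λ^{d-2-j} + ⋯ + a_{j+1})/p'(λ), which is a right eigenvector of the companion matrix of p with eigenvalue λ normalized so that ∑_j λ^j r_j = 1. -/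
/-!
Let `P` be the minimal polynomial of `λ` and `q = P /ₘ (X - λ)`; the formula for `r` says
`r = (coefficients of q) / P'(λ)`. Comparing coefficients in `(X - λ) q = P` gives the recurrence
`q_{i-1} = a_i + λ q_i`, `λ q_0 = -a_0`, `q_{d-1} = 1`, which says that `q` is an eigenvector of the
companion matrix; and `∑ λ^j q_j = q(λ) = P'(λ)`, which is nonzero since `P` is separable.

For the limit, `P` is irreducible over `ℚ`, so every complex root `μ` of `P` also satisfies
`μ^k = ∑ c_{k,i} μ^i`. The roots are simple, hence `∑_i c_{k,i} X^i` is the Lagrange interpolant of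
`μ ↦ μ^k` on them, i.e. `∑_μ μ^k L_μ`. After dividing by `λ^k`, every term with `|μ| < 1 < λ`
tends to `0`, leaving `L_λ = q / P'(λ)`, whose coefficient vector is `r`.
-/

open Polynomial Finset Filter Topology

namespace Polynomial

theorem coeff_divByMonic_X_sub_C_eq_sum_range {R : Type*} [CommRing R] (p : R[X]) (x : R)
    (j : ℕ) :
    (p /ₘ (X - C x)).coeff j = ∑ m ∈ range (p.natDegree - j), p.coeff (j + 1 + m) * x ^ m := by
  rw [coeff_divByMonic_X_sub_C, ← Finset.Ico_add_one_right_eq_Icc, sum_Ico_eq_sum_range,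
    Nat.add_sub_add_right]
  refine sum_congr rfl fun m _ => ?_
  rw [Nat.add_sub_cancel_left, mul_comm]

theorem eval_divByMonic_X_sub_C_of_isRoot {R : Type*} [CommRing R] {p : R[X]} {x : R}
    (hx : p.IsRoot x) : (p /ₘ (X - C x)).eval x = p.derivative.eval x := by
  conv_rhs => rw [← mul_divByMonic_eq_iff_isRoot.mpr hx]
  simp

theorem sum_pow_mul_coeff_divByMonic_X_sub_C {K : Type*} [Field K] {p : K[X]} {x : K} {d : ℕ}
    (hd : p.natDegree = d) (hx : p.IsRoot x) (hder : p.derivative.eval x ≠ 0) :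
    ∑ j : Fin d, x ^ (j : ℕ) * ((p /ₘ (X - C x)).coeff j / p.derivative.eval x) = 1 := by
  have hd0 : d ≠ 0 := by
    rintro rfl
    exact hder (by rw [derivative_of_natDegree_zero hd, eval_zero])
  have hq : (p /ₘ (X - C x)).natDegree < d := by
    rw [natDegree_divByMonic _ (monic_X_sub_C x), natDegree_X_sub_C]
    omega
  rw [← div_self hder, ← eval_divByMonic_X_sub_C_of_isRoot hx, eval_eq_sum_range' hq,
    ← Fin.sum_univ_eq_sum_range, sum_div]
  exact sum_congr rfl fun j _ => by ring

def companionMatrix {R : Type*} [Ring R] (p : R[X]) (d : ℕ) : Matrix (Fin d) (Fin d) R :=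
  Matrix.of fun i j => if (j : ℕ) = d - 1 then -p.coeff i else if (i : ℕ) = j + 1 then 1 else 0

theorem companionMatrix_mulVec_coeff_divByMonic {R : Type*} [CommRing R] {p : R[X]}
    (hp : p.Monic) {d : ℕ} (hd : p.natDegree = d) {x : R} (hx : p.IsRoot x) :
    (companionMatrix p d).mulVec (fun j : Fin d => (p /ₘ (X - C x)).coeff j) =
      x • fun j : Fin d => (p /ₘ (X - C x)).coeff j := by
  set q := p /ₘ (X - C x)
  ext ⟨i, hi⟩
  have hlast : q.coeff (d - 1) = 1 := by
    rw [coeff_divByMonic_X_sub_C_eq_sum_range, hd, Nat.sub_sub_self (by omega), sum_range_one,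
      Nat.sub_add_cancel (by omega), ← hd, add_zero, hp.coeff_natDegree, pow_zero, mul_one]
  have hconst : p.coeff 0 = -x * q.coeff 0 := by
    conv_lhs => rw [← mul_divByMonic_eq_iff_isRoot.mpr hx]
    simp [q, mul_coeff_zero]
  have hsplit : ∀ j ∈ range d, (if j = d - 1 then -p.coeff i else if i = j + 1 then 1 else 0) *
      q.coeff j = (if j = d - 1 then -p.coeff i * q.coeff j else 0) +
        (if j + 1 = i then q.coeff j else 0) := by
    intro j hj
    have := mem_range.mp hj
    split_ifs <;> first | omega | simp
  simp only [Matrix.mulVec, dotProduct, companionMatrix, Matrix.of_apply, Pi.smul_apply,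
    smul_eq_mul]
  rw [Fin.sum_univ_eq_sum_range (fun j => (if j = d - 1 then -p.coeff i else
    if i = j + 1 then 1 else 0) * q.coeff j), sum_congr rfl hsplit, sum_add_distrib,
    sum_ite_eq' _ _ _, if_pos (mem_range.mpr (by omega)), hlast]
  cases i with
  | zero => simp [hconst]
  | succ i =>
    simp only [Nat.add_right_cancel_iff, sum_ite_eq', mem_range, if_pos (by omega : i < d)]
    rw [coeff_divByMonic_X_sub_C_rec]
    ring

end Polynomial

namespace Lagrange

theorem coeff_eq_sum_eval_mul_coeff_basis {F : Type*} [Field F] [DecidableEq F] {s : Finset F}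
    {f : F[X]} (hf : f.degree < #s) (i : ℕ) :
    f.coeff i = ∑ μ ∈ s, f.eval μ * (Lagrange.basis s id μ).coeff i := by
  conv_lhs => rw [eq_interpolate Function.injective_id.injOn hf]
  simp only [interpolate_apply, finsetSum_coeff, coeff_C_mul, id_eq]

theorem basis_eq_C_inv_eval_derivative_mul_divByMonic {F : Type*} [Field F] [DecidableEq F]
    {s : Finset F} {x : F} (hx : x ∈ s) :
    Lagrange.basis s id x =
      C ((nodal s id).derivative.eval x)⁻¹ * (nodal s id /ₘ (X - C x)) := by
  rw [basis_eq_prod_sub_inv_mul_nodal_div hx, nodalWeight_eq_eval_derivative_nodal hx,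
    divByMonic_eq_div _ (monic_X_sub_C x), id]

theorem nodal_roots_toFinset {F : Type*} [Field F] [DecidableEq F] {p : F[X]} (hp : p.Monic)
    (hsplit : p.Splits) (hsep : p.Separable) : nodal p.roots.toFinset id = p := by
  rw [nodal, prod_eq_multiset_prod, Multiset.toFinset_val, (nodup_roots hsep).dedup]
  exact (hsplit.eq_prod_roots_of_monic hp).symm

end Lagrange

theorem tendsto_sum_pow_mul_div_pow {𝕜 : Type*} [NormedField 𝕜] {s : Finset 𝕜} {x : 𝕜}
    (hx : x ∈ s) (hx0 : x ≠ 0) (hdom : ∀ μ ∈ s, μ ≠ x → ‖μ‖ < ‖x‖) (w : 𝕜 → 𝕜) :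
    Tendsto (fun k : ℕ => (∑ μ ∈ s, μ ^ k * w μ) / x ^ k) atTop (𝓝 (w x)) := by
  classical
  have hsplit : ∀ k : ℕ, (∑ μ ∈ s, μ ^ k * w μ) / x ^ k =
      w x + ∑ μ ∈ s.erase x, (μ / x) ^ k * w μ := by
    intro k
    rw [← add_sum_erase s _ hx, add_div, sum_div, mul_div_cancel_left₀ _ (pow_ne_zero k hx0)]
    congr 1
    exact sum_congr rfl fun μ _ => by rw [div_pow]; ring
  have hsmall : ∀ μ ∈ s.erase x, Tendsto (fun k : ℕ => (μ / x) ^ k * w μ) atTop (𝓝 0) := by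
    intro μ hμ
    have hlt : ‖μ / x‖ < 1 := by
      rw [norm_div, div_lt_one (norm_pos_iff.mpr hx0)]
      exact hdom μ (mem_of_mem_erase hμ) (ne_of_mem_erase hμ)
    simpa using (tendsto_pow_atTop_nhds_zero_of_norm_lt_one hlt).mul_const (w μ)
  simp_rw [hsplit]
  simpa using tendsto_const_nhds.add (tendsto_finsetSum _ hsmall)

theorem pow_eq_sum_of_aeval_minpoly_eq_zero {K A B : Type*} [Field K] [Ring A] [Algebra K A]
    [CommRing B] [Algebra K B] {x : A} {μ : B} (hμ : aeval μ (minpoly K x) = 0) {n k : ℕ}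
    (c : Fin n → K) (hx : x ^ k = ∑ i, algebraMap K A (c i) * x ^ (i : ℕ)) :
    μ ^ k = ∑ i, algebraMap K B (c i) * μ ^ (i : ℕ) := by
  set g : K[X] := X ^ k - ∑ i, C (c i) * X ^ (i : ℕ)
  have hg : aeval x g = 0 := by simp [g, hx]
  simpa [g, sub_eq_zero] using aeval_eq_zero_of_dvd_aeval_eq_zero (minpoly.dvd K x hg) hμ

theorem aeval_minpoly_rat_eq_aeval_minpoly_int {K B : Type*} [Field K] [CharZero K] [CommRing B]
    [Algebra ℚ B] {x : K} (hx : IsIntegral ℤ x) (μ : B) :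
    aeval μ (minpoly ℚ x) = aeval μ (minpoly ℤ x) := by
  rw [minpoly.isIntegrallyClosed_eq_field_fractions' ℚ hx, aeval_map_algebraMap]

theorem separable_map_minpoly_int {K : Type*} [Field K] [CharZero K] {x : K}
    (hx : IsIntegral ℤ x) : ((minpoly ℤ x).map (algebraMap ℤ K)).Separable := by
  rw [IsScalarTower.algebraMap_eq ℤ ℚ K, ← Polynomial.map_map,
    ← minpoly.isIntegrallyClosed_eq_field_fractions' ℚ hx]
  exact (minpoly.irreducible hx.tower_top).separable.map

open Lagrange in
theorem tendsto_coeff_div_pow_of_dominant_root {P : ℝ[X]} (hP : P.Monic) (hsep : P.Separable)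
    {d : ℕ} (hd : P.natDegree = d) {x : ℝ} (hx : P.IsRoot x) (hx0 : x ≠ 0)
    (hdom : ∀ μ : ℂ, aeval μ P = 0 → μ ≠ x → ‖μ‖ < |x|) (c : ℕ → Fin d → ℝ)
    (hc : ∀ k (μ : ℂ), aeval μ P = 0 → μ ^ k = ∑ i, (c k i : ℂ) * μ ^ (i : ℕ)) :
    Tendsto (fun k i => c k i / x ^ k) atTop
      (𝓝 fun i => (P /ₘ (X - C x)).coeff i / P.derivative.eval x) := by
  classical
  set Q := P.map (algebraMap ℝ ℂ)
  set s := Q.roots.toFinset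
  have hQ : nodal s id = Q := nodal_roots_toFinset (hP.map _) (IsAlgClosed.splits Q) hsep.map
  have hmem : ∀ {μ : ℂ}, μ ∈ s ↔ aeval μ P = 0 := by
    intro μ
    simp [s, Q, mem_roots (hP.map _).ne_zero, aeval_def, eval_map]
  have hxs : (x : ℂ) ∈ s := by
    rw [hmem, ← Complex.coe_algebraMap, aeval_algebraMap_apply_eq_algebraMap_eval, hx.eq_zero,
      map_zero]
  have hcard : #s = d := by
    rw [← natDegree_nodal (v := id), hQ, natDegree_map, hd]
  have hexpand : ∀ k (i : Fin d),
      (c k i : ℂ) = ∑ μ ∈ s, μ ^ k * (Lagrange.basis s id μ).coeff i := by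
    intro k i
    set R : ℂ[X] := ∑ j : Fin d, C (c k j : ℂ) * X ^ (j : ℕ)
    have hR : R.degree < (#s : WithBot ℕ) := by
      rw [hcard]
      exact degree_sum_fin_lt _
    have hRi : R.coeff i = c k i := by
      simp [R, finsetSum_coeff, coeff_C_mul, coeff_X_pow, Fin.val_inj]
    rw [← hRi, coeff_eq_sum_eval_mul_coeff_basis hR]
    refine sum_congr rfl fun μ hμ => ?_
    rw [hc k μ (hmem.mp hμ)]
    simp [R, eval_finsetSum]
  have hbasis : ∀ i : Fin d, (Lagrange.basis s id (x : ℂ)).coeff i =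
      (((P /ₘ (X - C x)).coeff i / P.derivative.eval x : ℝ) : ℂ) := by
    intro i
    have hmap : Q /ₘ (X - C (x : ℂ)) = (P /ₘ (X - C x)).map (algebraMap ℝ ℂ) := by
      rw [map_divByMonic _ (monic_X_sub_C x)]
      simp [Q]
    rw [basis_eq_C_inv_eval_derivative_mul_divByMonic hxs, hQ, coeff_C_mul, hmap, coeff_map,
      derivative_map, eval_map, show (x : ℂ) = algebraMap ℝ ℂ x from rfl, eval₂_at_apply,
      Complex.coe_algebraMap, Complex.ofReal_div, div_eq_inv_mul]
  rw [tendsto_pi_nhds]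
  intro i
  have hlim := tendsto_sum_pow_mul_div_pow hxs (by exact_mod_cast hx0)
    (fun μ hμ hne => by simpa using hdom μ (hmem.mp hμ) hne) fun μ => (Lagrange.basis s id μ).coeff i
  simp_rw [← hexpand, hbasis] at hlim
  exact tendsto_ofReal_iff.mp (by exact_mod_cast hlim)

/-- For a Pisot number `λ` of degree `d` with minimal polynomial `p` and expansions
`λ^k = ∑_i c_{k,i} λ^i`, the vectors `(c_{k,i})/λ^k` converge to the vector `r` with
`r_j = (λ^{d-1-j} + a_{d-1}λ^{d-2-j} + ⋯ + a_{j+1})/p'(λ)`, which is a right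
eigenvector of the companion matrix of `p` with eigenvalue `λ`, normalized so that
`∑_j λ^j r_j = 1`. -/
theorem coeff_vectors_tendsto_eigenvector
    (lam : ℝ) (hp : IsPisot lam) (d : ℕ) (hd : d = (minpoly ℤ lam).natDegree)
    (a : ℕ → ℤ) (ha : ∀ i, a i = (minpoly ℤ lam).coeff i)
    (c : ℕ → Fin d → ℚ)
    (hc : ∀ k : ℕ, lam ^ k = ∑ i : Fin d, (c k i : ℝ) * lam ^ (i : ℕ))
    (r : Fin d → ℝ)
    (hr : ∀ j : Fin d, r j =
      (∑ m ∈ Finset.range (d - (j : ℕ)), (a ((j : ℕ) + 1 + m) : ℝ) * lam ^ m) /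
        Polynomial.aeval lam (Polynomial.derivative (minpoly ℤ lam)))
    (C : Matrix (Fin d) (Fin d) ℝ)
    (hC : ∀ i j : Fin d, C i j =
      if (j : ℕ) = d - 1 then -(a (i : ℕ) : ℝ)
      else if (i : ℕ) = (j : ℕ) + 1 then 1 else 0) :
    Filter.Tendsto (fun k : ℕ => fun i : Fin d => (c k i : ℝ) / lam ^ k)
      Filter.atTop (nhds r) ∧
    C.mulVec r = lam • r ∧
    ∑ j : Fin d, lam ^ (j : ℕ) * r j = 1 := by
  obtain ⟨hint, hlam1, hconj⟩ := hp
  set P : ℝ[X] := (minpoly ℤ lam).map (algebraMap ℤ ℝ)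
  set q : ℝ[X] := P /ₘ (X - Polynomial.C lam)
  have hPmonic : P.Monic := (minpoly.monic hint).map _
  have hPdeg : P.natDegree = d := by rw [(minpoly.monic hint).natDegree_map, hd]
  have hroot : P.IsRoot lam := by rw [IsRoot.def, eval_map_algebraMap, minpoly.aeval]
  have hsep : P.Separable := separable_map_minpoly_int hint
  have hr_eq : r = fun j : Fin d => q.coeff j / P.derivative.eval lam := by
    funext j
    rw [hr j, coeff_divByMonic_X_sub_C_eq_sum_range, hPdeg, derivative_map, eval_map_algebraMap]
    simp [P, ha]
  have hC_eq : C = companionMatrix P d := by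
    ext i j
    simp [hC, companionMatrix, P, ha]
  subst hr_eq hC_eq
  refine ⟨?_, ?_, ?_⟩
  · refine tendsto_coeff_div_pow_of_dominant_root hPmonic hsep hPdeg hroot
      (by linarith : (0 : ℝ) < lam).ne' (fun μ hμ hne => ?_) _ (fun k μ hμ => ?_)
    all_goals rw [aeval_map_algebraMap] at hμ
    · rw [abs_of_pos (by linarith)]
      exact (hconj μ hμ hne).trans hlam1
    · rw [← aeval_minpoly_rat_eq_aeval_minpoly_int hint] at hμ
      simpa using pow_eq_sum_of_aeval_minpoly_eq_zero hμ (c k) (by simpa using hc k)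
  · rw [show (fun j : Fin d => q.coeff j / P.derivative.eval lam) =
        (P.derivative.eval lam)⁻¹ • fun j : Fin d => q.coeff j from
        funext fun j => div_eq_inv_mul _ _,
      Matrix.mulVec_smul, companionMatrix_mulVec_coeff_divByMonic hPmonic hPdeg hroot, smul_comm]
  · exact sum_pow_mul_coeff_divByMonic_X_sub_C hPdeg hroot
      (hsep.eval₂_derivative_ne_zero (RingHom.id ℝ) hroot)
end

section
/- Let λ be a Pisot number of degree d with minimal polynomial p having constant coefficient a_0, and let α_0, …, α_{d-1} ∈ ℚ. Suppose there exist a real number L > 0 and an integer K such that for all k ≥ K and all 0 ≤ i < d, evaluating the linear functional ∑ α_i c_i on the coefficient expansion of λ^{k+i}L (with respect to the ℚ-basis L, Lλ, …, Lλ^{d-1} of L·ℚ(λ)) yields an integer. Then each α_i lies in ℤ[1/a_0], i.e., each α_i is an integer divided by a power of a_0. -/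
/-!
The coordinates of `λ ^ k` in the basis `1, λ, …, λ ^ (d - 1)` satisfy the linear recurrence
whose characteristic polynomial is the minimal polynomial `p` of `λ`, hence so does
`N k := N(λ ^ k L)`. Since `p` is monic with integer coefficients and `p 0 = a₀ ≠ 0`, the
recurrence can be solved for its lowest term: `N k` is `a₀⁻¹` times an integer combination of
`N (k + 1), …, N (k + d)`. Descending from the integers `N k`, `k ≥ K`, every `N k` lies in
`ℤ[1/a₀]`, and `α i = N i` for `i < d`.
-/

open Polynomial

section Recurrence

variable {K : Type*} [Field K]

def Polynomial.toLinearRecurrence (p : K[X]) : LinearRecurrence K :=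
  ⟨p.natDegree, fun i => -p.coeff i⟩

theorem LinearRecurrence.isSolution_sum {ι : Type*} [Fintype ι] {E : LinearRecurrence K}
    {v : ι → ℕ → K} (hv : ∀ j, E.IsSolution (v j)) (α : ι → K) :
    E.IsSolution fun k => ∑ j, α j * v j k := by
  have hsum : (fun k => ∑ j, α j * v j k) = ∑ j, α j • v j := by ext k; simp
  rw [LinearRecurrence.is_sol_iff_mem_solSpace, hsum]
  exact Submodule.sum_mem _ fun j _ => Submodule.smul_mem _ _ (hv j)

theorem LinearRecurrence.IsSolution.mem_of_eventually_mem {E : LinearRecurrence K}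
    {S : Subring K} (hE : ∀ i, E.coeffs i ∈ S) (h0 : 0 < E.order)
    (hc0 : E.coeffs ⟨0, h0⟩ ≠ 0) (hinv : (E.coeffs ⟨0, h0⟩)⁻¹ ∈ S) {u : ℕ → K}
    (hu : E.IsSolution u) {m : ℕ} (hm : ∀ k, m ≤ k → u k ∈ S) (k : ℕ) : u k ∈ S := by
  suffices ∀ j k, m ≤ k + j → u k ∈ S from this m k (by omega)
  intro j
  induction j with
  | zero => exact hm
  | succ j ih =>
    intro k hk
    have hrec := hu k
    rw [Fintype.sum_eq_add_sum_compl ⟨0, h0⟩] at hrec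
    have hshift : ∀ i ∈ ({⟨0, h0⟩}ᶜ : Finset (Fin E.order)), u (k + i) ∈ S := by
      intro i hi
      have : (i : ℕ) ≠ 0 := fun h =>
        Finset.mem_compl.mp hi (Finset.mem_singleton.mpr (Fin.ext h))
      exact ih _ (by omega)
    have hlow : u k = (E.coeffs ⟨0, h0⟩)⁻¹ *
        (u (k + E.order) - ∑ i ∈ {⟨0, h0⟩}ᶜ, E.coeffs i * u (k + i)) := by
      rw [hrec, Fin.val_mk, add_zero, add_sub_cancel_right, inv_mul_cancel_left₀ hc0]
    rw [hlow]
    exact S.mul_mem hinv (S.sub_mem (ih _ (by omega))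
      (S.sum_mem fun i hi => S.mul_mem (hE i) (hshift i hi)))

end Recurrence

section PowerCoordinates

variable {K A : Type*} [Field K] [Ring A] [Algebra K A] {x : A} {n : ℕ}
  {c : ℕ → Fin n → K}

theorem minpoly.pow_natDegree_eq (hx : IsIntegral K x) :
    x ^ (minpoly K x).natDegree =
      -∑ i : Fin (minpoly K x).natDegree, (minpoly K x).coeff i • x ^ (i : ℕ) := by
  have h := minpoly.aeval K x
  rw [(minpoly.monic hx).as_sum, map_add, map_pow, aeval_X, map_sum,
    ← Fin.sum_univ_eq_sum_range] at h
  simp only [map_mul, aeval_C, map_pow, aeval_X, Algebra.smul_def] at h ⊢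
  exact eq_neg_of_add_eq_zero_left h

theorem injective_sum_smul_pow (hn : (minpoly K x).natDegree = n) :
    Function.Injective fun f : Fin n → K => ∑ i, f i • x ^ (i : ℕ) := by
  subst hn
  exact fun f g h => funext (Fintype.linearIndependent_iffₛ.mp (linearIndependent_pow x) f g h)

theorem pow_coords_eq_single (hn : (minpoly K x).natDegree = n)
    (hc : ∀ k, x ^ k = ∑ i, c k i • x ^ (i : ℕ)) (i : Fin n) : c i = Pi.single i 1 :=
  injective_sum_smul_pow hn <| by
    simp only
    rw [← hc, Finset.sum_eq_single i (fun j _ hj => by simp [hj]) (by simp)]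
    simp

theorem isSolution_pow_coords (hx : IsIntegral K x) (hn : (minpoly K x).natDegree = n)
    (hc : ∀ k, x ^ k = ∑ i, c k i • x ^ (i : ℕ)) (j : Fin n) :
    (minpoly K x).toLinearRecurrence.IsSolution fun k => c k j := by
  subst hn
  intro k
  refine congrFun (injective_sum_smul_pow rfl (a₁ := c (k + (minpoly K x).natDegree))
    (a₂ := fun j => ∑ i : Fin _, -(minpoly K x).coeff i * c (k + i) j) ?_) j
  calc ∑ j, c (k + (minpoly K x).natDegree) j • x ^ (j : ℕ)
      = ∑ i : Fin (minpoly K x).natDegree, -(minpoly K x).coeff i • x ^ (k + i) := by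
        rw [← hc, pow_add, minpoly.pow_natDegree_eq hx, mul_neg, Finset.mul_sum,
          ← Finset.sum_neg_distrib]
        simp only [mul_smul_comm, ← pow_add, neg_smul]
    _ = ∑ j, (∑ i : Fin (minpoly K x).natDegree, -(minpoly K x).coeff i * c (k + i) j) •
          x ^ (j : ℕ) := by
        simp only [hc (k + _), Finset.smul_sum, smul_smul, Finset.sum_smul]
        exact Finset.sum_comm

end PowerCoordinates

theorem minpoly.coeff_rat_eq_int {A : Type*} [CommRing A] [IsDomain A] [Algebra ℚ A] {x : A}
    (hx : IsIntegral ℤ x) (m : ℕ) : (minpoly ℚ x).coeff m = (minpoly ℤ x).coeff m := by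
  simp [minpoly.isIntegrallyClosed_eq_field_fractions' ℚ hx]

theorem minpoly.natDegree_rat_eq_int {A : Type*} [CommRing A] [IsDomain A] [Algebra ℚ A]
    {x : A} (hx : IsIntegral ℤ x) : (minpoly ℚ x).natDegree = (minpoly ℤ x).natDegree := by
  rw [minpoly.isIntegrallyClosed_eq_field_fractions' ℚ hx,
    natDegree_map_eq_of_injective (RingHom.injective_int _)]

theorem Rat.exists_eq_div_pow_of_mem_closure_inv {a : ℤ} (ha : (a : ℚ) ≠ 0) {q : ℚ}
    (hq : q ∈ Subring.closure {(a : ℚ)⁻¹}) :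
    ∃ (z : ℤ) (e : ℕ), q = z / (a : ℚ) ^ e := by
  induction hq using Subring.closure_induction with
  | mem x hx => exact ⟨1, 1, by rw [Set.mem_singleton_iff.mp hx]; simp⟩
  | zero => exact ⟨0, 0, by simp⟩
  | one => exact ⟨1, 0, by simp⟩
  | add x y _ _ hx hy =>
    obtain ⟨z₁, e₁, rfl⟩ := hx
    obtain ⟨z₂, e₂, rfl⟩ := hy
    exact ⟨z₁ * a ^ e₂ + z₂ * a ^ e₁, e₁ + e₂, by field_simp; push_cast; ring⟩
  | neg x _ hx =>
    obtain ⟨z, e, rfl⟩ := hx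
    exact ⟨-z, e, by push_cast; ring⟩
  | mul x y _ _ hx hy =>
    obtain ⟨z₁, e₁, rfl⟩ := hx
    obtain ⟨z₂, e₂, rfl⟩ := hy
    exact ⟨z₁ * z₂, e₁ + e₂, by push_cast; ring⟩

/-- Let `λ` be a Pisot number of degree `d` with constant coefficient `a_0`, and
`α_0, …, α_{d-1} ∈ ℚ`. If for some `L > 0` and all `k ≥ K`, `0 ≤ i < d`, the linear
functional `∑ α_i c_i` yields an integer on the coefficient expansion of `λ^{k+i} L`
(w.r.t. the basis `L, Lλ, …, Lλ^{d-1}`), then each `α_i` lies in `ℤ[1/a_0]`. -/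
theorem alpha_mem_int_inv_a0
    (lam : ℝ) (hp : IsPisot lam) (d : ℕ) (hd : d = (minpoly ℤ lam).natDegree)
    (a0 : ℤ) (ha0 : a0 = (minpoly ℤ lam).coeff 0)
    (α : Fin d → ℚ) (L : ℝ) (hL : 0 < L) (K : ℕ)
    (c : ℕ → Fin d → ℚ)
    (hc : ∀ k : ℕ, lam ^ k * L = ∑ i : Fin d, (c k i : ℝ) * lam ^ (i : ℕ) * L)
    (hint : ∀ k : ℕ, K ≤ k → ∀ i : Fin d,
      ∃ z : ℤ, ∑ j : Fin d, α j * c (k + (i : ℕ)) j = (z : ℚ)) :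
    ∀ i : Fin d, ∃ (z : ℤ) (e : ℕ), α i = (z : ℚ) / (a0 : ℚ) ^ e := by
  intro i
  obtain ⟨hlam, hlam1, -⟩ := hp
  have hdeg : (minpoly ℚ lam).natDegree = d := (minpoly.natDegree_rat_eq_int hlam).trans hd.symm
  have hp0 : (minpoly ℚ lam).coeff 0 = a0 := by rw [minpoly.coeff_rat_eq_int hlam, ha0]
  have hp0_ne : (minpoly ℚ lam).coeff 0 ≠ 0 :=
    minpoly.coeff_zero_ne_zero hlam.tower_top (zero_lt_one.trans hlam1).ne'
  have hcoord (k : ℕ) : lam ^ k = ∑ j, c k j • lam ^ (j : ℕ) := by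
    refine mul_right_cancel₀ hL.ne' ((hc k).trans ?_)
    simp only [Finset.sum_mul, Rat.smul_def]
  let N : ℕ → ℚ := fun k => ∑ j, α j * c k j
  have hN : (minpoly ℚ lam).toLinearRecurrence.IsSolution N := LinearRecurrence.isSolution_sum
    (fun j => isSolution_pow_coords hlam.tower_top hdeg hcoord j) α
  have hd0 : 0 < (minpoly ℚ lam).natDegree := hdeg ▸ i.pos
  have hNS : ∀ k, N k ∈ Subring.closure {(a0 : ℚ)⁻¹} := by
    refine hN.mem_of_eventually_mem (m := K)
      (fun m => neg_mem (minpoly.coeff_rat_eq_int hlam m ▸ intCast_mem _ _)) hd0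
      (neg_ne_zero.mpr hp0_ne) ?_ fun k hk => ?_
    · show (-(minpoly ℚ lam).coeff 0)⁻¹ ∈ _
      rw [inv_neg, neg_mem_iff, hp0]
      exact Subring.subset_closure rfl
    · obtain ⟨z, hz⟩ := hint k hk ⟨0, i.pos⟩
      exact (by simpa using hz : N k = z) ▸ intCast_mem _ z
  have hNi : N i = α i := by simp [N, pow_coords_eq_single hdeg hcoord i, Pi.single_apply]
  exact Rat.exists_eq_div_pow_of_mem_closure_inv (hp0 ▸ hp0_ne) (hNi ▸ hNS i)
end
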